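/- Let φ: (M,g) → ℝ^m be an isometric immersion of an n-dimensional Riemannian manifold into Euclidean m-space, with position vector field x decomposed as x = x^T + x^N into tangential and normal components. Then (M, g, x^T, λ) is a Yamabe soliton (i.e., (1/2)L_{x^T} g = (R − λ) g for a constant λ) if and only if the second fundamental form h of M satisfies ⟨h(V,W), x^N⟩ = (R − λ − 1) g(V,W) for all vectors V, W tangent to M, where R is the scalar curvature of M. -/

import Mathlib

open scoped RealInnerProductSpace

noncomputable section

/-- Extrinsic data of a Riemannian submanifold `M` of the Euclidean space `ℝ^m`,
recorded through: the position vector field `pos` (i.e. the isometric immersion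
`x`), the tangent spaces `tangent p ⊆ ℝ^m`, the ambient Euclidean covariant
derivative `amb` (`∇̃`), the induced Levi-Civita connection `conn` (`∇`), the
second fundamental form `sff` (`h`), the shape operator `shape` (`A`) and the
normal connection `normConn` (`D`), subject to the formulas of Gauss and of
Weingarten.  Since the immersion is isometric, the induced metric is
`g(v, w) = ⟪v, w⟫` on tangent vectors. -/
structure EuclideanSubmanifold (m : ℕ) where
  /-- the underlying manifold -/
  M : Type
  /-- the topology of `M` -/
  topology : TopologicalSpace M
  /-- the position vector field `x`, i.e. the isometric immersion into `ℝ^m` -/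
  pos : M → EuclideanSpace ℝ (Fin m)
  /-- the tangent space at each point, viewed as a subspace of `ℝ^m` -/
  tangent : M → Submodule ℝ (EuclideanSpace ℝ (Fin m))
  /-- the ambient Euclidean covariant derivative `∇̃` of an `ℝ^m`-valued field
  along a (tangent) vector field -/
  amb : (M → EuclideanSpace ℝ (Fin m)) → (M → EuclideanSpace ℝ (Fin m)) →
    (M → EuclideanSpace ℝ (Fin m))
  /-- the Levi-Civita connection `∇` of the induced metric -/
  conn : (M → EuclideanSpace ℝ (Fin m)) → (M → EuclideanSpace ℝ (Fin m)) →
    (M → EuclideanSpace ℝ (Fin m))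
  /-- the second fundamental form `h` (pointwise, on tangent vectors) -/
  sff : M → EuclideanSpace ℝ (Fin m) → EuclideanSpace ℝ (Fin m) →
    EuclideanSpace ℝ (Fin m)
  /-- the shape operator `A η v` (pointwise: normal vector `η`, tangent vector `v`) -/
  shape : M → EuclideanSpace ℝ (Fin m) → EuclideanSpace ℝ (Fin m) →
    EuclideanSpace ℝ (Fin m)
  /-- the normal connection `D` -/
  normConn : (M → EuclideanSpace ℝ (Fin m)) → (M → EuclideanSpace ℝ (Fin m)) →
    (M → EuclideanSpace ℝ (Fin m))
  amb_add : ∀ X Y Z, amb X (fun p => Y p + Z p) = fun p => amb X Y p + amb X Z p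
  conn_tangent : ∀ X Y, (∀ p, X p ∈ tangent p) → (∀ p, Y p ∈ tangent p) →
    ∀ p, conn X Y p ∈ tangent p
  sff_normal : ∀ p v w, sff p v w ∈ (tangent p)ᗮ
  sff_symm : ∀ p v w, sff p v w = sff p w v
  shape_tangent : ∀ p η v, shape p η v ∈ tangent p
  normConn_normal : ∀ X η, (∀ p, X p ∈ tangent p) → (∀ p, η p ∈ (tangent p)ᗮ) →
    ∀ p, normConn X η p ∈ (tangent p)ᗮ
  /-- the formula of Gauss: `∇̃_X Y = ∇_X Y + h(X, Y)` -/
  gauss : ∀ X Y, (∀ p, X p ∈ tangent p) → (∀ p, Y p ∈ tangent p) →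
    ∀ p, amb X Y p = conn X Y p + sff p (X p) (Y p)
  /-- the formula of Weingarten: `∇̃_X η = −A_η X + D_X η` -/
  weingarten : ∀ X η, (∀ p, X p ∈ tangent p) → (∀ p, η p ∈ (tangent p)ᗮ) →
    ∀ p, amb X η p = -shape p (η p) (X p) + normConn X η p
  /-- `⟨h(X, Y), η⟩ = g(A_η X, Y)` -/
  shape_sff : ∀ p v w η, v ∈ tangent p → w ∈ tangent p → η ∈ (tangent p)ᗮ →
    ⟪sff p v w, η⟫ = ⟪shape p η v, w⟫
  /-- the position vector field is concurrent: `∇̃_V x = V` -/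
  concurrent : ∀ X, (∀ p, X p ∈ tangent p) → amb X pos = X

attribute [instance] EuclideanSubmanifold.topology

namespace EuclideanSubmanifold

variable {m : ℕ} (S : EuclideanSubmanifold m)

/-- The tangential component `x^T` of the position vector field. -/
def posT (p : S.M) : EuclideanSpace ℝ (Fin m) :=
  (Submodule.orthogonalProjection (S.tangent p) (S.pos p) : EuclideanSpace ℝ (Fin m))

/-- The normal component `x^N` of the position vector field, so `x = x^T + x^N`. -/
def posN (p : S.M) : EuclideanSpace ℝ (Fin m) :=
  S.pos p - S.posT p

/-- A vector field on `M` is tangent if it takes values in the tangent spaces. -/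
def IsTangent (X : S.M → EuclideanSpace ℝ (Fin m)) : Prop :=
  ∀ p, X p ∈ S.tangent p

/-- The Lie derivative of the induced metric along a vector field `X`, expressed
through the Levi-Civita connection: `(L_X g)(V, W) = g(∇_V X, W) + g(∇_W X, V)`. -/
def lieDeriv (X V W : S.M → EuclideanSpace ℝ (Fin m)) (p : S.M) : ℝ :=
  ⟪S.conn V X p, W p⟫ + ⟪S.conn W X p, V p⟫

/-- The Riemann curvature `(0,4)`-tensor of `M`, obtained from the equation of
Gauss (the ambient Euclidean space being flat):
`⟨R(X,Y)Z, W⟩ = ⟨h(X,W), h(Y,Z)⟩ − ⟨h(X,Z), h(Y,W)⟩`. -/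
def rm (p : S.M) (x y z w : EuclideanSpace ℝ (Fin m)) : ℝ :=
  ⟪S.sff p x w, S.sff p y z⟫ - ⟪S.sff p x z, S.sff p y w⟫

/-- The Ricci tensor of `M`, the trace of the curvature tensor over an
orthonormal basis of the tangent space. -/
def ricci (p : S.M) (x y : EuclideanSpace ℝ (Fin m)) : ℝ :=
  ∑ i, S.rm p (stdOrthonormalBasis ℝ (S.tangent p) i : EuclideanSpace ℝ (Fin m))
    x y (stdOrthonormalBasis ℝ (S.tangent p) i : EuclideanSpace ℝ (Fin m))

/-- The scalar curvature `R` of `M`: the sum `∑_{i ≠ j} K_{ij}` of sectional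
curvatures over an orthonormal basis of the tangent space (the diagonal terms
of the double trace vanish). -/
def scal (p : S.M) : ℝ :=
  ∑ i, S.ricci p (stdOrthonormalBasis ℝ (S.tangent p) i : EuclideanSpace ℝ (Fin m))
    (stdOrthonormalBasis ℝ (S.tangent p) i : EuclideanSpace ℝ (Fin m))

/-- `(M, g, X, λ)` is a Yamabe soliton: `(1/2) L_X g = (R − λ) g`. -/
def IsYamabeSoliton (X : S.M → EuclideanSpace ℝ (Fin m)) (l : ℝ) : Prop :=
  ∀ V W, S.IsTangent V → S.IsTangent W → ∀ p,
    (1 / 2) * S.lieDeriv X V W p = (S.scal p - l) * ⟪V p, W p⟫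

/-- `(M, g, X, λ, μ)` is a quasi-Yamabe soliton:
`(1/2) L_X g = (R − λ) g + μ X^♯ ⊗ X^♯`, where `X^♯` is the 1-form dual to `X`. -/
def IsQuasiYamabeSoliton (X : S.M → EuclideanSpace ℝ (Fin m)) (l : ℝ)
    (μ : S.M → ℝ) : Prop :=
  ∀ V W, S.IsTangent V → S.IsTangent W → ∀ p,
    (1 / 2) * S.lieDeriv X V W p =
      (S.scal p - l) * ⟪V p, W p⟫ + μ p * ⟪X p, V p⟫ * ⟪X p, W p⟫

end EuclideanSubmanifold

namespace EuclideanSubmanifold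

section

variable {m : ℕ} (S : EuclideanSubmanifold m)

theorem posT_isTangent : S.IsTangent S.posT :=
  fun _ => SetLike.coe_mem _

theorem posN_mem_orthogonal (p : S.M) : S.posN p ∈ (S.tangent p)ᗮ :=
  Submodule.sub_starProjection_mem_orthogonal (K := S.tangent p) (S.pos p)

theorem posT_add_posN : (fun p => S.posT p + S.posN p) = S.pos := by
  funext p
  simp only [posN, add_sub_cancel]

variable {S}

/-- Differentiating `x = x^T + x^N` along `V` with the formulas of Gauss and Weingarten,
the concurrency `∇̃_V x = V` splits into tangential and normal parts; the tangential part is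
`V = ∇_V x^T - A_{x^N} V`. -/
theorem inner_conn_posT {V W : S.M → EuclideanSpace ℝ (Fin m)} (hV : S.IsTangent V)
    (hW : S.IsTangent W) (p : S.M) :
    ⟪S.conn V S.posT p, W p⟫ = ⟪V p, W p⟫ + ⟪S.sff p (V p) (W p), S.posN p⟫ := by
  have hN := S.posN_mem_orthogonal
  have hsplit : S.amb V S.posT p + S.amb V S.posN p = V p := by
    have h := congrFun (S.amb_add V S.posT S.posN) p
    rw [S.posT_add_posN, S.concurrent V hV] at h
    exact h.symm
  rw [S.gauss V S.posT hV S.posT_isTangent p, S.weingarten V S.posN hV hN p] at hsplit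
  have hsff : ⟪S.sff p (V p) (S.posT p), W p⟫ = 0 :=
    Submodule.inner_left_of_mem_orthogonal (hW p) (S.sff_normal p _ _)
  have hnormConn : ⟪S.normConn V S.posN p, W p⟫ = 0 :=
    Submodule.inner_left_of_mem_orthogonal (hW p)
      (S.normConn_normal V S.posN hV hN p)
  have hshape := S.shape_sff p (V p) (W p) (S.posN p) (hV p) (hW p) (hN p)
  have hinner := congrArg (⟪·, W p⟫) hsplit
  simp only [inner_add_left, inner_neg_left, hsff, hnormConn] at hinner
  linarith

theorem lieDeriv_posT {V W : S.M → EuclideanSpace ℝ (Fin m)} (hV : S.IsTangent V)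
    (hW : S.IsTangent W) (p : S.M) :
    S.lieDeriv S.posT V W p = 2 * (⟪V p, W p⟫ + ⟪S.sff p (V p) (W p), S.posN p⟫) := by
  rw [lieDeriv, inner_conn_posT hV hW, inner_conn_posT hW hV, S.sff_symm p (W p),
    real_inner_comm (W p)]
  ring

end

theorem isYamabeSoliton_posT_iff_general {m : ℕ} (S : EuclideanSubmanifold m) (l : ℝ) :
    S.IsYamabeSoliton S.posT l ↔
      ∀ V W, S.IsTangent V → S.IsTangent W → ∀ p,
        ⟪S.sff p (V p) (W p), S.posN p⟫ = (S.scal p - l - 1) * ⟪V p, W p⟫ := by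
  refine forall₄_congr fun V W hV hW => forall_congr' fun p => ?_
  rw [lieDeriv_posT hV hW]
  constructor <;> intro h <;> linarith

/-- **Theorem 3.1.** Let `φ : (M,g) → ℝ^m` be an isometric immersion of an
`n`-dimensional Riemannian manifold into Euclidean `m`-space, with position
vector field `x = x^T + x^N`.  Then `(M, g, x^T, λ)` is a Yamabe soliton if and
only if the second fundamental form `h` of `M` satisfies
`⟨h(V,W), x^N⟩ = (R − λ − 1) g(V,W)` for all vector fields `V, W` tangent to
`M`, where `R` is the scalar curvature of `M` and `λ` is a constant. -/
theorem isYamabeSoliton_posT_iff {m n : ℕ} (S : EuclideanSubmanifold m)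
    (hdim : ∀ p, Module.finrank ℝ (S.tangent p) = n) (l : ℝ) :
    S.IsYamabeSoliton S.posT l ↔
      ∀ V W, S.IsTangent V → S.IsTangent W → ∀ p,
        ⟪S.sff p (V p) (W p), S.posN p⟫ = (S.scal p - l - 1) * ⟪V p, W p⟫ :=
  isYamabeSoliton_posT_iff_general S l

end EuclideanSubmanifold
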